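/- The quadratic form a ↦ B′(a,a) on ℝ⁴ is not negative definite: there exists a nonzero vector a ∈ ℝ⁴ with B′(a,a) ≥ 0 (indeed B′(∇,∇) = 0 for the nonzero vector ∇ = (2,1,1,0)). -/
import Mathlib


open Matrix

/-- The Gram matrix of the intersection form on the subspace of `(−1)•`-invariant cycles
in the Milnor fibre of the corner singularity `x₁⁴ + x₂⁴ + y₁²` (the singularity `M₄`),
regarded over `ℝ`. -/
def G' : Matrix (Fin 4) (Fin 4) ℝ :=
  !![-2,  2,  2, -4;
      2, -4,  0,  4;
      2,  0, -4,  4;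
     -4,  4,  4, -8]

/-- The associated symmetric bilinear form `B′(u,v) = uᵀG′v` on `ℝ⁴`. -/
def B' (u v : Fin 4 → ℝ) : ℝ := u ⬝ᵥ G'.mulVec v

lemma key : ((![2, 1, 1, 0] : Fin 4 → ℝ) ≠ 0 ∧ B' ![2, 1, 1, 0] ![2, 1, 1, 0] = 0) := by
  constructor
  · intro h
    have := congrFun h 0
    simp at this
  · simp [B', G', dotProduct, mulVec, Fin.sum_univ_four]
    norm_num

/-- The quadratic form `a ↦ B′(a,a)` on `ℝ⁴` is not negative definite: there exists a
nonzero vector `a` with `B′(a,a) ≥ 0`; indeed `B′(∇,∇) = 0` for the nonzero vector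
`∇ = (2,1,1,0)`. -/
theorem form_not_negative_definite' :
    ((![2, 1, 1, 0] : Fin 4 → ℝ) ≠ 0 ∧ B' ![2, 1, 1, 0] ![2, 1, 1, 0] = 0) ∧
      ∃ a : Fin 4 → ℝ, a ≠ 0 ∧ 0 ≤ B' a a := by
  exact ⟨key, ![2,1,1,0], key.1, le_of_eq key.2.symm⟩
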